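/- arXiv:2001.04399 — 4 statements merged into one kernel-verified Lean document; each statement's English description precedes it below -/
import Mathlib

section
/- Let G be a complex simply-laced semisimple algebraic group of rank r, let i = (i_1,…,i_n) ∈ [r]^n be a word, and let λ = Σ_{i=1}^r λ_i ϖ_i be a dominant weight. Let c = c(i) be determined from i by c_{jk} = ⟨α_{i_k}, α_{i_j}^∨⟩, and let ℓ = (ℓ_1,…,ℓ_n) be given by ℓ_j = λ_{i_j} for 1 ≤ j ≤ n. Then the corresponding Grossberg–Karshon twisted cube (C(c,ℓ), ρ) is untwisted if and only if i is hesitant-λ-walk-avoiding. -/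
open Finset

attribute [local instance] Classical.propDecidable

/-- Distance from a vertex to a set of vertices (in `ℕ∞`; `⊤` for empty set or
unreachable vertices), i.e. `d(v, A) = min { d(v,a) : a ∈ A }`. -/
noncomputable def dSet {V : Type*} (Γ : SimpleGraph V) (v : V) (A : Set V) : ℕ∞ :=
  ⨅ a ∈ A, Γ.edist v a

/-- Cartan integers of a simply-laced group whose Dynkin diagram is the graph `Γ`:
`c̄_{a,b} = 2` if `a = b`, `-1` if `d(a,b) = 1`, and `0` otherwise. -/
noncomputable def cartan {V : Type*} (Γ : SimpleGraph V) (a b : V) : ℤ :=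
  if a = b then 2 else if Γ.edist a b = 1 then -1 else 0

/-- A word `(i 0, …, i (n-1))` is a jumping walk if `d(i j, {i 0, …, i (j-1)}) = 1`
for all `1 ≤ j < n`. -/
def IsJumpingWalk {V : Type*} (Γ : SimpleGraph V) (n : ℕ) (i : ℕ → V) : Prop :=
  ∀ j, 1 ≤ j → j < n → dSet Γ (i j) {x | ∃ k, k < j ∧ i k = x} = 1

/-- A word `(i 0, …, i (m-1))` is a hesitant jumping walk if `m ≥ 2`, `i 0 = i 1`,
and the tail `(i 1, …, i (m-1))` is a jumping walk. -/
def IsHesitantJumpingWalk {V : Type*} (Γ : SimpleGraph V) (m : ℕ) (i : ℕ → V) : Prop :=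
  2 ≤ m ∧ i 0 = i 1 ∧ IsJumpingWalk Γ (m - 1) (fun t => i (t + 1))

/-- A word `(i 0, …, i (m-1))` with nonnegative integers `(ℓ 0, …, ℓ (m-1))` is a
hesitant jumping `ℓ`-walk if it is a hesitant jumping walk and
`ℓ 0 - ℓ 1 < ℓ 1 + ⋯ + ℓ (m-1)`. -/
def IsHesitantJumpingLWalk {V : Type*} (Γ : SimpleGraph V) (m : ℕ) (i : ℕ → V)
    (ℓ : ℕ → ℤ) : Prop :=
  IsHesitantJumpingWalk Γ m i ∧ ℓ 0 - ℓ 1 < ∑ t ∈ Finset.Ico 1 m, ℓ t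

/-- The word `(i 0, …, i (n-1))` with `(ℓ 0, …, ℓ (n-1))` is
hesitant-jumping-`ℓ`-walk-avoiding if no subword (indexed by a strictly increasing
sequence `j`) is a hesitant jumping walk for the corresponding subsequence of `ℓ`. -/
def IsHJLWalkAvoiding {V : Type*} (Γ : SimpleGraph V) (n : ℕ) (i : ℕ → V)
    (ℓ : ℕ → ℤ) : Prop :=
  ¬ ∃ (m : ℕ) (j : ℕ → ℕ), StrictMono j ∧ (∀ t, t < m → j t < n) ∧
      IsHesitantJumpingLWalk Γ m (fun t => i (j t)) (fun t => ℓ (j t))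

/-- A word `(i 0, …, i (n-1))` is a diagram walk if `d(i j, i (j+1)) = 1` for all
`0 ≤ j < n - 1`. -/
def IsDiagramWalk {V : Type*} (Γ : SimpleGraph V) (n : ℕ) (i : ℕ → V) : Prop :=
  ∀ j, j + 1 < n → Γ.edist (i j) (i (j + 1)) = 1

/-- For a dominant weight `λ = Σ λ_i ϖ_i`, a word `(i 0, …, i (m-1))` is a hesitant
`λ`-walk if `m ≥ 2`, `i 0 = i 1`, the tail `(i 1, …, i (m-1))` is a diagram walk, and
`λ_{i (m-1)} > 0`. -/
def IsHesitantLamWalk {V : Type*} (Γ : SimpleGraph V) (m : ℕ) (i : ℕ → V)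
    (lam : V → ℤ) : Prop :=
  2 ≤ m ∧ i 0 = i 1 ∧ IsDiagramWalk Γ (m - 1) (fun t => i (t + 1)) ∧ 0 < lam (i (m - 1))

/-- The word `(i 0, …, i (n-1))` is hesitant-`λ`-walk-avoiding if no subword is a
hesitant `λ`-walk. -/
def IsHLamWalkAvoiding {V : Type*} (Γ : SimpleGraph V) (n : ℕ) (i : ℕ → V)
    (lam : V → ℤ) : Prop :=
  ¬ ∃ (m : ℕ) (j : ℕ → ℕ), StrictMono j ∧ (∀ t, t < m → j t < n) ∧
      IsHesitantLamWalk Γ m (fun t => i (j t)) lam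

/-- The function `A_j(x) = ℓ_j - Σ_{k > j} c_{jk} x_k` (indices `0,…,n-1`). -/
def Afun (n : ℕ) (c : ℕ → ℕ → ℤ) (ℓ : ℕ → ℤ) (j : ℕ) (x : Fin n → ℝ) : ℝ :=
  (ℓ j : ℝ) - ∑ k : Fin n, if j < (k : ℕ) then (c j (k : ℕ) : ℝ) * x k else 0

/-- The Grossberg–Karshon twisted cube
`C(c, ℓ) = {x ∈ ℝ^n | ∀ j, A_j(x) < x_j < 0 or 0 ≤ x_j ≤ A_j(x)}`. -/
def twistedCube (n : ℕ) (c : ℕ → ℕ → ℤ) (ℓ : ℕ → ℤ) : Set (Fin n → ℝ) :=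
  {x | ∀ j : Fin n,
    (Afun n c ℓ (j : ℕ) x < x j ∧ x j < 0) ∨ (0 ≤ x j ∧ x j ≤ Afun n c ℓ (j : ℕ) x)}

/-- `sgn(t) = 1` for `t < 0` and `sgn(t) = -1` for `t ≥ 0`. -/
noncomputable def gkSgn (t : ℝ) : ℝ := if t < 0 then 1 else -1

/-- The density function `ρ` of the Grossberg–Karshon twisted cube:
`ρ(x) = (-1)^n Π_k sgn(x_k)` on `C(c,ℓ)` and `0` elsewhere. -/
noncomputable def gkRho (n : ℕ) (c : ℕ → ℕ → ℤ) (ℓ : ℕ → ℤ) (x : Fin n → ℝ) : ℝ :=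
  if x ∈ twistedCube n c ℓ then (-1 : ℝ) ^ n * ∏ k : Fin n, gkSgn (x k) else 0

/-- The Grossberg–Karshon twisted cube `(C(c,ℓ), ρ)` is untwisted if `C(c,ℓ)` is a
closed convex polytope and the density function `ρ` equals `1` on `C(c,ℓ)`. -/
def IsUntwisted (n : ℕ) (c : ℕ → ℕ → ℤ) (ℓ : ℕ → ℤ) : Prop :=
  IsClosed (twistedCube n c ℓ) ∧ Convex ℝ (twistedCube n c ℓ) ∧
    (∃ S : Finset (Fin n → ℝ), twistedCube n c ℓ = convexHull ℝ (S : Set (Fin n → ℝ))) ∧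
    ∀ x ∈ twistedCube n c ℓ, gkRho n c ℓ x = 1

/-- The Cartier data `m_{σ,j}`, defined by downward recursion: `m_{σ,j} = 0` if
`σ_j = +` (here `false`), and `m_{σ,j} = ℓ_j - Σ_{k > j} c_{jk} m_{σ,k}` if
`σ_j = -` (here `true`). -/
def mSigma (n : ℕ) (c : ℕ → ℕ → ℤ) (ℓ : ℕ → ℤ) (σ : ℕ → Bool) (j : ℕ) : ℤ :=
  if σ j then
    ℓ j - ∑ k ∈ (Finset.Ico (j + 1) n).attach, c j (k : ℕ) * mSigma n c ℓ σ (k : ℕ)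
  else 0
termination_by n - j
decreasing_by
  have h := Finset.mem_Ico.mp k.2
  omega

/-!
If the word avoids hesitant `λ`-walks, then `0 ≤ x_k ≤ A_k(x)` for all `k > j` forces
`A_j(x) ≥ 0`. Otherwise some `k > j` has `0 < c̄(i_j, i_k) x_k`, so `i_k = i_j` and `x_k > 0`;
while `λ_{i_k} = 0`, the inequality `0 < x_k ≤ A_k(x)` produces a later `k'` with
`c̄(i_k, i_{k'}) < 0 < x_{k'}`, and this climbs along a diagram walk up to a letter of positive
weight, which together with position `j` is a hesitant `λ`-walk. By downward induction every
point of the cube then has nonnegative coordinates, so `ρ = 1`, and the cube is built coordinate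
by coordinate as the segments `[0, A_j]` over a polytope on which the affine function `A_j` is
nonnegative, which is again a polytope.

Conversely, take a hesitant `λ`-walk at positions `p_0 < ⋯ < p_{m-1}` of minimal length, so
that its tail letters are distinct, with `p_0` the last occurrence of `i_{p_1}` before `p_1`.
A point supported on these positions and negative only at `p_0` satisfies all the inequalities
of the cube, and `ρ = -1` there.
-/

section Cartan

variable {V : Type*} (Γ : SimpleGraph V)

lemma cartan_self (a : V) : cartan Γ a a = 2 := by simp [cartan]

lemma cartan_nonpos_of_ne {a b : V} (h : a ≠ b) : cartan Γ a b ≤ 0 := by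
  simp only [cartan, if_neg h]
  split_ifs <;> norm_num

lemma cartan_of_edist_eq_one {a b : V} (h : Γ.edist a b = 1) : cartan Γ a b = -1 := by
  have hab : a ≠ b := by
    rintro rfl
    simp at h
  simp [cartan, hab, h]

lemma edist_eq_one_of_cartan_neg {a b : V} (h : cartan Γ a b < 0) : Γ.edist a b = 1 := by
  unfold cartan at h
  split_ifs at h with h₁ h₂ <;> first | exact h₂ | omega

end Cartan

def IsPolytope {E : Type*} [AddCommGroup E] [Module ℝ E] (K : Set E) : Prop :=
  ∃ S : Finset E, K = convexHull ℝ (S : Set E)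

theorem IsPolytope.setOf_add_smul {E : Type*} [AddCommGroup E] [Module ℝ E] {K : Set E}
    (hK : IsPolytope K) (f : E →ᵃ[ℝ] ℝ) (hf : ∀ y ∈ K, 0 ≤ f y) (e : E) :
    IsPolytope {x | ∃ y ∈ K, ∃ t ∈ Set.Icc 0 (f y), x = y + t • e} := by
  classical
  obtain ⟨S, rfl⟩ := hK
  let g : E →ᵃ[ℝ] E := AffineMap.id ℝ E + (LinearMap.toSpanSingleton ℝ E e).toAffineMap.comp f
  have hg : ∀ y, g y = y + f y • e := fun y => by simp [g]
  refine ⟨S ∪ S.image g, Set.Subset.antisymm ?_ (convexHull_min ?_ ?_)⟩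
  · rintro x ⟨y, hy, t, ht, rfl⟩
    have hgy : g y ∈ convexHull ℝ (g '' S) := by
      rw [← AffineMap.image_convexHull]
      exact Set.mem_image_of_mem g hy
    have hseg : y + t • e ∈ segment ℝ y (g y) := by
      let h : ℝ →ᵃ[ℝ] E := (LinearMap.toSpanSingleton ℝ E e).toAffineMap + AffineMap.const ℝ ℝ y
      have hsegh : segment ℝ y (g y) = h '' Set.Icc 0 (f y) := by
        rw [← segment_eq_Icc (ht.1.trans ht.2), image_segment]
        simp [h, hg, add_comm]
      rw [hsegh]
      exact ⟨t, ht, by simp [h, add_comm]⟩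
    refine (convex_convexHull ℝ _).segment_subset ?_ ?_ hseg
    · exact convexHull_mono (by simp) hy
    · exact convexHull_mono (by simp) hgy
  · rintro x hx
    simp only [Finset.coe_union, Finset.coe_image, Set.mem_union, Finset.mem_coe,
      Set.mem_image] at hx
    rcases hx with hx | ⟨y, hy, rfl⟩
    · exact ⟨x, subset_convexHull ℝ _ hx, 0, ⟨le_rfl, hf x (subset_convexHull ℝ _ hx)⟩, by simp⟩
    · exact ⟨y, subset_convexHull ℝ _ hy, f y, ⟨hf y (subset_convexHull ℝ _ hy), le_rfl⟩, hg y⟩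
  · rintro _ ⟨y₁, hy₁, t₁, ht₁, rfl⟩ _ ⟨y₂, hy₂, t₂, ht₂, rfl⟩ a b ha hb hab
    refine ⟨a • y₁ + b • y₂, convex_convexHull ℝ _ hy₁ hy₂ ha hb hab, a * t₁ + b * t₂, ⟨?_, ?_⟩,
      by module⟩
    · have := ht₁.1
      have := ht₂.1
      positivity
    · rw [Convex.combo_affine_apply hab, smul_eq_mul, smul_eq_mul]
      gcongr
      exacts [ht₁.2, ht₂.2]

/-! ## Twisted cubes whose functions `A_j` stay nonnegative -/

section TwistedCube

variable {n : ℕ} (c : ℕ → ℕ → ℤ) (ℓ : ℕ → ℤ)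

variable (n) in
def afunAffine (j : ℕ) : (Fin n → ℝ) →ᵃ[ℝ] ℝ :=
  AffineMap.const ℝ (Fin n → ℝ) (ℓ j : ℝ) -
    (∑ k : Fin n, if j < (k : ℕ) then (c j k : ℝ) • LinearMap.proj k else 0 :
      (Fin n → ℝ) →ₗ[ℝ] ℝ).toAffineMap

@[simp]
lemma afunAffine_apply (j : ℕ) (x : Fin n → ℝ) : afunAffine n c ℓ j x = Afun n c ℓ j x := by
  simp only [afunAffine, Afun, AffineMap.coe_sub, AffineMap.coe_const,
    LinearMap.coe_toAffineMap, Pi.sub_apply, Function.const_apply, LinearMap.sum_apply]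
  refine congrArg _ (Finset.sum_congr rfl fun k _ => ?_)
  split_ifs <;> simp

lemma Afun_congr {j : ℕ} {x y : Fin n → ℝ} (h : ∀ k : Fin n, j < (k : ℕ) → x k = y k) :
    Afun n c ℓ j x = Afun n c ℓ j y := by
  unfold Afun
  refine congrArg _ (Finset.sum_congr rfl fun k _ => ?_)
  split_ifs with hjk
  · rw [h k hjk]
  · rfl

variable (n) in
def posCubeFrom (j : ℕ) : Set (Fin n → ℝ) :=
  {x | ∀ k : Fin n, ((k : ℕ) < j → x k = 0) ∧ (j ≤ (k : ℕ) → 0 ≤ x k ∧ x k ≤ Afun n c ℓ k x)}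

variable (n) in
def AfunNonnegAbove : Prop :=
  ∀ (j : ℕ) (x : Fin n → ℝ), (∀ k : Fin n, j < (k : ℕ) → 0 ≤ x k ∧ x k ≤ Afun n c ℓ k x) →
    0 ≤ Afun n c ℓ j x

lemma Afun_add_smul_single {j k : ℕ} (hj : j < n) (hjk : j ≤ k) (y : Fin n → ℝ) (t : ℝ) :
    Afun n c ℓ k (y + t • Pi.single ⟨j, hj⟩ 1) = Afun n c ℓ k y :=
  Afun_congr c ℓ fun k' hk' => by simp [Fin.ext_iff, show (k' : ℕ) ≠ j by omega]

lemma posCubeFrom_eq_setOf_add_smul {j : ℕ} (hj : j < n) :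
    posCubeFrom n c ℓ j = {x | ∃ y ∈ posCubeFrom n c ℓ (j + 1),
      ∃ t ∈ Set.Icc 0 (afunAffine n c ℓ j y), x = y + t • Pi.single ⟨j, hj⟩ 1} := by
  set jF : Fin n := ⟨j, hj⟩
  have apply_of_ne : ∀ (y : Fin n → ℝ) (t : ℝ) (k : Fin n), (k : ℕ) ≠ j →
      (y + t • Pi.single jF 1 : Fin n → ℝ) k = y k := fun y t k hk => by
    simp [Pi.single_eq_of_ne (show k ≠ jF from fun h => hk (congrArg Fin.val h))]
  ext x
  constructor
  · intro hx
    refine ⟨x + (-x jF) • Pi.single jF 1, fun k => ⟨fun hk => ?_, fun hk => ?_⟩, x jF, ?_,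
      by module⟩
    · rcases Nat.lt_succ_iff_lt_or_eq.mp hk with hk | hk
      · rw [apply_of_ne _ _ _ hk.ne]
        exact (hx k).1 hk
      · obtain rfl : k = jF := Fin.ext hk
        simp
    · rw [Afun_add_smul_single c ℓ hj (by omega), apply_of_ne _ _ k (by omega)]
      exact (hx k).2 (by omega)
    · rw [afunAffine_apply, Afun_add_smul_single c ℓ hj le_rfl]
      exact (hx jF).2 le_rfl
  · rintro ⟨y, hy, t, ht, rfl⟩ k
    refine ⟨fun hk => ?_, fun hk => ?_⟩
    · rw [apply_of_ne _ _ _ hk.ne]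
      exact (hy k).1 (by omega)
    · rw [Afun_add_smul_single c ℓ hj hk]
      rcases hk.lt_or_eq with hk | hk
      · rw [apply_of_ne _ _ _ hk.ne']
        exact (hy k).2 hk
      · obtain rfl : k = jF := Fin.ext hk.symm
        simpa [(hy jF).1 (Nat.lt_succ_self j)] using ht

variable {c ℓ}

lemma exists_pos_term_of_Afun_lt {j : ℕ} {x : Fin n → ℝ} (h : Afun n c ℓ j x < ℓ j) :
    ∃ k : Fin n, j < (k : ℕ) ∧ 0 < (c j k : ℝ) * x k := by
  unfold Afun at h
  have hsum : ∑ _k : Fin n, (0 : ℝ) <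
      ∑ k : Fin n, if j < (k : ℕ) then (c j k : ℝ) * x k else 0 := by
    rw [Finset.sum_const_zero]
    linarith
  obtain ⟨k, -, hk⟩ := Finset.exists_lt_of_sum_lt hsum
  split_ifs at hk with hjk
  exacts [⟨k, hjk, hk⟩, absurd hk (lt_irrefl 0)]

lemma exists_neg_term_of_lt_Afun {j : ℕ} {x : Fin n → ℝ} (h : (ℓ j : ℝ) < Afun n c ℓ j x) :
    ∃ k : Fin n, j < (k : ℕ) ∧ (c j k : ℝ) * x k < 0 := by
  unfold Afun at h
  have hsum : ∑ k : Fin n, (if j < (k : ℕ) then (c j k : ℝ) * x k else 0) <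
      ∑ _k : Fin n, 0 := by
    rw [Finset.sum_const_zero]
    linarith
  obtain ⟨k, -, hk⟩ := Finset.exists_lt_of_sum_lt hsum
  split_ifs at hk with hjk
  exacts [⟨k, hjk, hk⟩, absurd hk (lt_irrefl 0)]

theorem isPolytope_posCubeFrom (h : AfunNonnegAbove n c ℓ) (j : ℕ) :
    IsPolytope (posCubeFrom n c ℓ j) := by
  by_cases hj : j < n
  · rw [posCubeFrom_eq_setOf_add_smul c ℓ hj]
    exact (isPolytope_posCubeFrom h (j + 1)).setOf_add_smul _
      (fun y hy => by simpa using h j y fun k hk => (hy k).2 hk) _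
  · refine ⟨{0}, ?_⟩
    ext x
    simp only [Finset.coe_singleton, convexHull_singleton, Set.mem_singleton_iff]
    refine ⟨fun hx => funext fun k => (hx k).1 (by omega), ?_⟩
    rintro rfl k
    exact ⟨fun _ => rfl, fun hk => absurd k.isLt (by omega)⟩
termination_by n - j

theorem nonneg_of_mem_twistedCube (h : AfunNonnegAbove n c ℓ) {x : Fin n → ℝ}
    (hx : x ∈ twistedCube n c ℓ) (k : Fin n) : 0 ≤ x k := by
  refine (hx k).elim (fun hneg => absurd hneg.2 (not_lt.mpr ?_)) And.left
  refine le_trans (h k x fun k' hk' => ?_) hneg.1.le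
  exact (hx k').resolve_left fun h' => h'.2.not_ge (nonneg_of_mem_twistedCube h hx k')
termination_by n - k

theorem twistedCube_eq_posCubeFrom_zero (h : AfunNonnegAbove n c ℓ) :
    twistedCube n c ℓ = posCubeFrom n c ℓ 0 := by
  ext x
  refine ⟨fun hx k => ⟨fun hk => absurd hk (Nat.not_lt_zero _), fun _ => ?_⟩,
    fun hx k => Or.inr ((hx k).2 (Nat.zero_le _))⟩
  exact (hx k).resolve_left fun h' => h'.2.not_ge (nonneg_of_mem_twistedCube h hx k)

theorem gkRho_eq_neg_one_pow {x : Fin n → ℝ} (hx : x ∈ twistedCube n c ℓ) :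
    gkRho n c ℓ x = (-1) ^ (Finset.univ.filter fun k => x k < 0).card := by
  rw [gkRho, if_pos hx]
  simp only [gkSgn, Finset.prod_ite, Finset.prod_const_one, Finset.prod_const, one_mul]
  set N := (Finset.univ.filter fun k => x k < 0).card
  set P := (Finset.univ.filter fun k => ¬x k < 0).card
  have hNP : N + P = n := by
    have := Finset.card_filter_add_card_filter_not (s := Finset.univ) fun k => x k < 0
    rwa [Finset.card_univ, Fintype.card_fin] at this
  rw [show (-1 : ℝ) ^ n = (-1) ^ (N + P) by rw [hNP], pow_add, mul_assoc, ← mul_pow,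
    neg_one_mul, neg_neg, one_pow, mul_one]

theorem isUntwisted_of_afunNonnegAbove (h : AfunNonnegAbove n c ℓ) : IsUntwisted n c ℓ := by
  obtain ⟨S, hS⟩ := isPolytope_posCubeFrom h 0
  rw [← twistedCube_eq_posCubeFrom_zero h] at hS
  refine ⟨?_, ?_, ⟨S, hS⟩, fun x hx => ?_⟩
  · rw [hS]
    exact S.finite_toSet.isClosed_convexHull ℝ
  · rw [hS]
    exact convex_convexHull ℝ _
  · rw [gkRho_eq_neg_one_pow hx, Finset.card_eq_zero.mpr, pow_zero]
    exact Finset.filter_false_of_mem fun k _ => not_lt.mpr (nonneg_of_mem_twistedCube h hx k)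

end TwistedCube

/-! ## Subwords that are walks in the diagram -/

def consSeq {α : Type*} (a : α) (f : ℕ → α) : ℕ → α
  | 0 => a
  | t + 1 => f t

lemma strictMono_consSeq {a : ℕ} {f : ℕ → ℕ} (ha : a < f 0) (hf : StrictMono f) :
    StrictMono (consSeq a f) :=
  strictMono_nat_of_lt_succ fun t => by
    cases t with
    | zero => exact ha
    | succ t => exact hf t.lt_succ_self

section Subwords

variable {V : Type*} (Γ : SimpleGraph V) (n : ℕ) (i : ℕ → V) (lam : V → ℤ)

def IsLamWalkSubword (m : ℕ) (f : ℕ → ℕ) : Prop :=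
  1 ≤ m ∧ StrictMono f ∧ (∀ t < m, f t < n) ∧ IsDiagramWalk Γ m (fun t => i (f t)) ∧
    0 < lam (i (f (m - 1)))

def IsHesitantSubword (m : ℕ) (p : ℕ → ℕ) : Prop :=
  StrictMono p ∧ (∀ t, t < m → p t < n) ∧ IsHesitantLamWalk Γ m (fun t => i (p t)) lam

variable {Γ n i lam} {m : ℕ}

lemma IsHesitantLamWalk.edist_eq_one {a : ℕ → V} (ha : IsHesitantLamWalk Γ m a lam) {s : ℕ}
    (hs : 1 ≤ s) (hsm : s + 1 < m) : Γ.edist (a s) (a (s + 1)) = 1 := by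
  obtain ⟨s, rfl⟩ := Nat.exists_eq_add_of_le' hs
  exact ha.2.2.1 s (by omega)

lemma IsLamWalkSubword.cons {f : ℕ → ℕ} {q : ℕ} (hf : IsLamWalkSubword Γ n i lam m f)
    (hq : q < f 0) (hadj : Γ.edist (i q) (i (f 0)) = 1) :
    IsLamWalkSubword Γ n i lam (m + 1) (consSeq q f) := by
  obtain ⟨hm, hmono, hn, hwalk, hlast⟩ := hf
  refine ⟨by omega, strictMono_consSeq hq hmono, fun t ht => ?_, fun t ht => ?_, ?_⟩
  · cases t with
    | zero => exact hq.trans (hn 0 hm)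
    | succ t => exact hn t (by omega)
  · cases t with
    | zero => exact hadj
    | succ t => exact hwalk t (by omega)
  · obtain ⟨m, rfl⟩ := Nat.exists_eq_add_of_le' hm
    exact hlast

lemma IsLamWalkSubword.hesitant_cons {f : ℕ → ℕ} {q : ℕ} (hf : IsLamWalkSubword Γ n i lam m f)
    (hq : q < f 0) (heq : i q = i (f 0)) :
    IsHesitantSubword Γ n i lam (m + 1) (consSeq q f) := by
  obtain ⟨hm, hmono, hn, hwalk, hlast⟩ := hf
  refine ⟨strictMono_consSeq hq hmono, fun t ht => ?_, by omega, heq, hwalk, ?_⟩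
  · cases t with
    | zero => exact hq.trans (hn 0 hm)
    | succ t => exact hn t (by omega)
  · obtain ⟨m, rfl⟩ := Nat.exists_eq_add_of_le' hm
    exact hlast

lemma IsHesitantSubword.tail {p : ℕ → ℕ} (hp : IsHesitantSubword Γ n i lam m p) :
    IsLamWalkSubword Γ n i lam (m - 1) (fun t => p (t + 1)) := by
  obtain ⟨hmono, hn, hm, -, hwalk, hlast⟩ := hp
  refine ⟨by omega, fun a b hab => hmono (by omega), fun t ht => hn _ (by omega), hwalk, ?_⟩
  simpa only [show m - 1 - 1 + 1 = m - 1 by omega] using hlast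

lemma IsLamWalkSubword.drop {f : ℕ → ℕ} (hf : IsLamWalkSubword Γ n i lam m f) {d : ℕ}
    (hd : d < m) : IsLamWalkSubword Γ n i lam (m - d) (fun t => f (t + d)) := by
  obtain ⟨-, hmono, hn, hwalk, hlast⟩ := hf
  refine ⟨by omega, fun a b hab => hmono (by omega), fun t ht => hn _ (by omega),
    fun t ht => ?_, ?_⟩
  · simpa only [show t + 1 + d = t + d + 1 by omega] using hwalk (t + d) (by omega)
  · simpa only [show m - d - 1 + d = m - 1 by omega] using hlast

end Subwords

/-! ## Walk-avoiding words give untwisted cubes -/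

section Avoiding

variable {V : Type*} {Γ : SimpleGraph V} {n : ℕ} {i : ℕ → V} {lam : V → ℤ}

theorem exists_lamWalkSubword_of_pos (hlam : ∀ a, 0 ≤ lam a) {x : Fin n → ℝ} {j : ℕ}
    (hx : ∀ k : Fin n, j < (k : ℕ) → 0 ≤ x k ∧
      x k ≤ Afun n (fun p q => cartan Γ (i p) (i q)) (fun p => lam (i p)) k x)
    (k : Fin n) (hjk : j < (k : ℕ)) (hxk : 0 < x k) :
    ∃ m f, IsLamWalkSubword Γ n i lam m f ∧ f 0 = k := by
  by_cases hk : 0 < lam (i k)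
  · refine ⟨1, fun t => k + t, ⟨le_rfl, fun a b h => by simpa using h, fun t ht => ?_,
      fun t ht => by omega, hk⟩, rfl⟩
    have := k.isLt
    dsimp only
    omega
  have hlt : (lam (i k) : ℝ) < x k := by
    rw [show lam (i k) = 0 by linarith [hlam (i k)]]
    exact_mod_cast hxk
  obtain ⟨k', hkk', hneg⟩ :=
    exists_neg_term_of_lt_Afun (ℓ := fun p => lam (i p)) (hlt.trans_le (hx k hjk).2)
  obtain ⟨hc, hxk'⟩ : cartan Γ (i k) (i k') < 0 ∧ 0 < x k' := by
    rcases mul_neg_iff.mp hneg with h | h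
    · exact absurd h.2 (not_lt.mpr (hx k' (hjk.trans hkk')).1)
    · exact ⟨by exact_mod_cast h.1, h.2⟩
  obtain ⟨m, f, hf, hf0⟩ := exists_lamWalkSubword_of_pos hlam hx k' (hjk.trans hkk') hxk'
  refine ⟨m + 1, consSeq k f, hf.cons (hf0 ▸ hkk') ?_, rfl⟩
  rw [hf0]
  exact edist_eq_one_of_cartan_neg Γ hc
termination_by n - k

theorem afunNonnegAbove_of_avoiding (hlam : ∀ a, 0 ≤ lam a)
    (hav : IsHLamWalkAvoiding Γ n i lam) :
    AfunNonnegAbove n (fun p q => cartan Γ (i p) (i q)) (fun p => lam (i p)) := by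
  intro j x hx
  by_contra! hneg
  obtain ⟨k, hjk, hpos⟩ := exists_pos_term_of_Afun_lt (ℓ := fun p => lam (i p))
    (hneg.trans_le (by exact_mod_cast hlam (i j)))
  obtain ⟨hc, hxk⟩ := (mul_pos_iff.mp hpos).resolve_right fun h => (hx k hjk).1.not_gt h.2
  have heq : i j = i k := by
    by_contra hne
    exact (cartan_nonpos_of_ne Γ hne).not_gt (by exact_mod_cast hc)
  obtain ⟨m, f, hf, hf0⟩ := exists_lamWalkSubword_of_pos hlam hx k hjk hxk
  exact hav ⟨m + 1, consSeq j f, hf.hesitant_cons (hf0 ▸ hjk) (hf0 ▸ heq)⟩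

end Avoiding

/-! ## A point of the cube with exactly one negative coordinate -/

section Normalize

variable {V : Type*} {Γ : SimpleGraph V} {n : ℕ} {i : ℕ → V} {lam : V → ℤ} {m : ℕ}
  {p : ℕ → ℕ}

lemma IsHesitantSubword.exists_shorter_of_eq (hp : IsHesitantSubword Γ n i lam m p) {s t : ℕ}
    (hs : 1 ≤ s) (hst : s < t) (ht : t < m) (heq : i (p s) = i (p t)) :
    ∃ m' < m, ∃ p', IsHesitantSubword Γ n i lam m' p' := by
  have hpt : p (0 + (t - 1) + 1) = p t := congrArg p (by omega)
  refine ⟨_, ?_, _, (hp.tail.drop (d := t - 1) (by omega)).hesitant_cons (q := p s) ?_ ?_⟩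
  · omega
  · exact hpt ▸ hp.1 hst
  · exact hpt ▸ heq

lemma IsHesitantSubword.injOn_of_minimal (hp : IsHesitantSubword Γ n i lam m p)
    (hmin : ∀ m' < m, ∀ p', ¬IsHesitantSubword Γ n i lam m' p') :
    Set.InjOn (fun t => i (p t)) (Set.Ico 1 m) := by
  intro s hs t ht heq
  by_contra hne
  rcases lt_or_gt_of_ne hne with hlt | hlt
  · obtain ⟨m', hm', p', hp'⟩ := hp.exists_shorter_of_eq hs.1 hlt ht.2 heq
    exact hmin m' hm' p' hp'
  · obtain ⟨m', hm', p', hp'⟩ := hp.exists_shorter_of_eq ht.1 hlt hs.2 heq.symm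
    exact hmin m' hm' p' hp'

lemma IsHesitantSubword.exists_last_hesitation (hp : IsHesitantSubword Γ n i lam m p) :
    ∃ q, IsHesitantSubword Γ n i lam m (consSeq q fun t => p (t + 1)) ∧
      ∀ k, q < k → k < p 1 → i k ≠ i (p 1) := by
  classical
  obtain ⟨hmono, -, hm, heq, -⟩ := id hp
  have hp01 : p 0 < p 1 := hmono zero_lt_one
  set q := Nat.findGreatest (fun k => i k = i (p 1)) (p 1 - 1)
  have hq : i q = i (p 1) :=
    Nat.findGreatest_spec (P := fun k => i k = i (p 1)) (by omega : p 0 ≤ p 1 - 1) heq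
  have hq1 : q < p 1 := by
    have := Nat.findGreatest_le (P := fun k => i k = i (p 1)) (p 1 - 1)
    omega
  refine ⟨q, ?_, fun k hqk hk => Nat.findGreatest_is_greatest hqk (by omega)⟩
  have := hp.tail.hesitant_cons hq1 hq
  rwa [Nat.sub_add_cancel (by omega : 1 ≤ m)] at this

theorem exists_normalized_hesitantSubword (h : ∃ m p, IsHesitantSubword Γ n i lam m p) :
    ∃ m p, IsHesitantSubword Γ n i lam m p ∧ Set.InjOn (fun t => i (p t)) (Set.Ico 1 m) ∧
      ∀ k, p 0 < k → k < p 1 → i k ≠ i (p 1) := by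
  classical
  obtain ⟨p, hp⟩ := Nat.find_spec h
  have hinj := hp.injOn_of_minimal fun m' hm' p' hp' => Nat.find_min h hm' ⟨p', hp'⟩
  obtain ⟨q, hq, hlast⟩ := hp.exists_last_hesitation
  refine ⟨_, _, hq, hinj.congr fun t ht => ?_, hlast⟩
  obtain ⟨t, rfl⟩ := Nat.exists_eq_add_of_le' ht.1
  rfl

end Normalize

section CartanSum

variable {V : Type*} (Γ : SimpleGraph V)

noncomputable def cartanSum (a : ℕ → V) (w : ℕ → ℝ) (u : V) (T m : ℕ) : ℝ :=
  ∑ t ∈ Finset.Ico T m, (cartan Γ u (a t) : ℝ) * w t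

variable {Γ} {a : ℕ → V} {w : ℕ → ℝ} {m : ℕ}

lemma cartanSum_eq_add (u : V) {T : ℕ} (hT : T < m) :
    cartanSum Γ a w u T m = cartan Γ u (a T) * w T + cartanSum Γ a w u (T + 1) m :=
  Finset.sum_eq_sum_Ico_succ_bot hT _

lemma cartanSum_nonpos {u : V} {T : ℕ} (hw : ∀ t, T ≤ t → t < m → 0 ≤ w t)
    (hu : ∀ t, T ≤ t → t < m → a t ≠ u) : cartanSum Γ a w u T m ≤ 0 :=
  Finset.sum_nonpos fun t ht => by
    obtain ⟨h₁, h₂⟩ := Finset.mem_Ico.mp ht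
    exact mul_nonpos_of_nonpos_of_nonneg
      (by exact_mod_cast cartan_nonpos_of_ne Γ (hu t h₁ h₂).symm) (hw t h₁ h₂)

lemma cartanSum_succ_le {s : ℕ} (hs : s < m) (hw : ∀ t, s < t → t < m → 0 ≤ w t)
    (hinj : Set.InjOn a (Set.Ico s m)) (hadj : s + 1 < m → Γ.edist (a s) (a (s + 1)) = 1)
    (hwm : w m = 0) : cartanSum Γ a w (a s) (s + 1) m ≤ -w (s + 1) := by
  rcases (show s + 1 ≤ m by omega).lt_or_eq with h | h
  · have hrest : cartanSum Γ a w (a s) (s + 2) m ≤ 0 :=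
      cartanSum_nonpos (fun t h₁ h₂ => hw t (by omega) h₂) fun t h₁ h₂ heq => by
        have := hinj ⟨by omega, h₂⟩ ⟨le_rfl, hs⟩ heq
        omega
    rw [cartanSum_eq_add _ h, cartan_of_edist_eq_one Γ (hadj h)]
    push_cast
    linarith
  · rw [h, hwm, cartanSum, Finset.Ico_self, Finset.sum_empty, neg_zero]

lemma cartanSum_le_of_mem {s T : ℕ} (hTs : T ≤ s) (hs : s < m)
    (hw : ∀ t, T ≤ t → t < m → 0 ≤ w t) (hinj : Set.InjOn a (Set.Ico T m))
    (hadj : s + 1 < m → Γ.edist (a s) (a (s + 1)) = 1) (hwm : w m = 0) :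
    cartanSum Γ a w (a s) T m ≤ 2 * w s - w (s + 1) := by
  have hbefore : cartanSum Γ a w (a s) T s ≤ 0 :=
    cartanSum_nonpos (fun t h₁ h₂ => hw t h₁ (by omega)) fun t h₁ h₂ heq => by
      have := hinj ⟨h₁, by omega⟩ ⟨hTs, hs⟩ heq
      omega
  have hafter := cartanSum_succ_le hs (fun t h₁ h₂ => hw t (by omega) h₂)
    (hinj.mono (Set.Ico_subset_Ico_left hTs)) hadj hwm
  rw [cartanSum, ← Finset.sum_Ico_consecutive _ hTs hs.le, ← cartanSum, ← cartanSum,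
    cartanSum_eq_add _ hs, cartan_self]
  push_cast
  linarith

end CartanSum

noncomputable def tailWeight (L : ℝ) (m t : ℕ) : ℝ := if t < m then L * 2 ^ t / 2 ^ m else 0

section TailWeight

variable {L : ℝ} {m : ℕ}

lemma tailWeight_pos (hL : 0 < L) {t : ℕ} (ht : t < m) : 0 < tailWeight L m t := by
  rw [tailWeight, if_pos ht]
  positivity

lemma tailWeight_nonneg (hL : 0 ≤ L) (t : ℕ) : 0 ≤ tailWeight L m t := by
  unfold tailWeight
  split_ifs <;> positivity

lemma tailWeight_self : tailWeight L m m = 0 := by simp [tailWeight]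

lemma two_mul_tailWeight_sub {s : ℕ} (hs : s < m) :
    2 * tailWeight L m s - tailWeight L m (s + 1) = if s + 1 = m then L else 0 := by
  unfold tailWeight
  rw [if_pos hs]
  split_ifs with h₁ h₂ h₂
  · omega
  · ring
  · subst h₂
    field_simp
    ring
  · omega

end TailWeight

section HesitantWeight

variable {V : Type*} (Γ : SimpleGraph V) (lam : V → ℤ) (a : ℕ → V) (m : ℕ)

/-- The coordinates at `p_0, …, p_{m-1}` of the point with one negative coordinate. From `p_2` on
they double, ending with `λ/2` where `λ > 0` is the weight of the last letter, so that
`2 w_s - w_{s+1}` is `0` inside the walk and `λ` at its end; `w_1` turns the inequality at `p_1`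
into an equality, and `w_0 = -w_1/2` lies strictly between `A_{p_0} = -w_1` and `0`. -/
noncomputable def hesitantWeight : ℕ → ℝ :=
  let L : ℝ := lam (a (m - 1))
  let w₁ : ℝ := lam (a 1) - cartanSum Γ a (tailWeight L m) (a 1) 2 m
  consSeq (-w₁ / 2) (consSeq w₁ fun t => tailWeight L m (t + 2))

variable {Γ lam a m}

lemma hesitantWeight_of_two_le {t : ℕ} (ht : 2 ≤ t) :
    hesitantWeight Γ lam a m t = tailWeight (lam (a (m - 1))) m t := by
  obtain ⟨t, rfl⟩ := Nat.exists_eq_add_of_le' ht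
  rfl

lemma hesitantWeight_self (hm : 2 ≤ m) : hesitantWeight Γ lam a m m = 0 := by
  rw [hesitantWeight_of_two_le hm, tailWeight_self]

lemma hesitantWeight_zero : hesitantWeight Γ lam a m 0 = -hesitantWeight Γ lam a m 1 / 2 := rfl

lemma cartanSum_hesitantWeight_two :
    cartanSum Γ a (hesitantWeight Γ lam a m) (a 1) 2 m =
      lam (a 1) - hesitantWeight Γ lam a m 1 := by
  have : cartanSum Γ a (hesitantWeight Γ lam a m) (a 1) 2 m =
      cartanSum Γ a (tailWeight (lam (a (m - 1))) m) (a 1) 2 m :=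
    Finset.sum_congr rfl fun t ht => by
      rw [hesitantWeight_of_two_le (Finset.mem_Ico.mp ht).1]
  rw [this]
  simp only [hesitantWeight, consSeq]
  ring

lemma cartanSum_hesitantWeight_one (hm : 1 < m) :
    cartanSum Γ a (hesitantWeight Γ lam a m) (a 1) 1 m =
      hesitantWeight Γ lam a m 1 + lam (a 1) := by
  rw [cartanSum_eq_add _ hm, cartan_self, cartanSum_hesitantWeight_two]
  push_cast
  ring

lemma hesitantWeight_one_pos (hlam : ∀ u, 0 ≤ lam u) (ha : IsHesitantLamWalk Γ m a lam)
    (hinj : Set.InjOn a (Set.Ico 1 m)) : 0 < hesitantWeight Γ lam a m 1 := by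
  obtain ⟨hm, -, -, hL⟩ := id ha
  have hL' : (0 : ℝ) < lam (a (m - 1)) := by exact_mod_cast hL
  have hsum := cartanSum_succ_le (Γ := Γ) (s := 1) (w := tailWeight (lam (a (m - 1))) m)
    (by omega) (fun t _ _ => tailWeight_nonneg hL'.le t) hinj (ha.edist_eq_one le_rfl)
    tailWeight_self
  have hpos : 0 < (lam (a 1) : ℝ) + tailWeight (lam (a (m - 1))) m 2 := by
    rcases hm.lt_or_eq with hm | rfl
    · linarith [tailWeight_pos hL' hm, (by exact_mod_cast hlam (a 1) : (0 : ℝ) ≤ lam (a 1))]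
    · simpa [tailWeight] using hL'
  simp only [hesitantWeight, consSeq]
  linarith

lemma hesitantWeight_nonneg (hlam : ∀ u, 0 ≤ lam u) (ha : IsHesitantLamWalk Γ m a lam)
    (hinj : Set.InjOn a (Set.Ico 1 m)) {t : ℕ} (ht : 1 ≤ t) :
    0 ≤ hesitantWeight Γ lam a m t := by
  rcases ht.lt_or_eq with ht | rfl
  · rw [hesitantWeight_of_two_le ht]
    exact tailWeight_nonneg (by exact_mod_cast hlam _) t
  · exact (hesitantWeight_one_pos hlam ha hinj).le

lemma two_mul_hesitantWeight_sub_le (hlam : ∀ u, 0 ≤ lam u) {s : ℕ} (hs : 2 ≤ s) (hsm : s < m) :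
    2 * hesitantWeight Γ lam a m s - hesitantWeight Γ lam a m (s + 1) ≤ lam (a s) := by
  rw [hesitantWeight_of_two_le hs, hesitantWeight_of_two_le (by omega),
    two_mul_tailWeight_sub hsm]
  split_ifs with h
  · rw [show m - 1 = s by omega]
  · exact_mod_cast hlam _

lemma cartanSum_hesitantWeight_le_of_two_le (hlam : ∀ u, 0 ≤ lam u)
    (ha : IsHesitantLamWalk Γ m a lam) (hinj : Set.InjOn a (Set.Ico 1 m)) (u : V) {T : ℕ}
    (hT : 2 ≤ T) : cartanSum Γ a (hesitantWeight Γ lam a m) u T m ≤ lam u := by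
  have hw : ∀ t, T ≤ t → t < m → 0 ≤ hesitantWeight Γ lam a m t :=
    fun t h₁ _ => hesitantWeight_nonneg hlam ha hinj (by omega)
  by_cases hu : ∃ s, T ≤ s ∧ s < m ∧ a s = u
  · obtain ⟨s, hTs, hs, rfl⟩ := hu
    calc cartanSum Γ a (hesitantWeight Γ lam a m) (a s) T m
        ≤ 2 * hesitantWeight Γ lam a m s - hesitantWeight Γ lam a m (s + 1) :=
          cartanSum_le_of_mem hTs hs hw (hinj.mono (Set.Ico_subset_Ico_left (by omega)))
            (ha.edist_eq_one (by omega)) (hesitantWeight_self ha.1)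
      _ ≤ lam (a s) := two_mul_hesitantWeight_sub_le hlam (by omega) hs
  · push Not at hu
    exact (cartanSum_nonpos hw hu).trans (by exact_mod_cast hlam u)

lemma cartanSum_hesitantWeight_le (hlam : ∀ u, 0 ≤ lam u) (ha : IsHesitantLamWalk Γ m a lam)
    (hinj : Set.InjOn a (Set.Ico 1 m)) (u : V) (T : ℕ) (hT : u = a 1 → T ≠ 1) :
    cartanSum Γ a (hesitantWeight Γ lam a m) u T m ≤ lam u := by
  have hm := ha.1
  have h₂ := cartanSum_hesitantWeight_le_of_two_le hlam ha hinj u le_rfl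
  have hc : u ≠ a 1 → (cartan Γ u (a 1) : ℝ) * hesitantWeight Γ lam a m 1 ≤ 0 := fun hu =>
    mul_nonpos_of_nonpos_of_nonneg (by exact_mod_cast cartan_nonpos_of_ne Γ hu)
      (hesitantWeight_one_pos hlam ha hinj).le
  rcases (by omega : T = 0 ∨ T = 1 ∨ 2 ≤ T) with rfl | rfl | hT2
  · rw [cartanSum_eq_add u (by omega), cartanSum_eq_add u (by omega), ha.2.1,
      hesitantWeight_zero]
    by_cases hu : u = a 1
    · subst hu
      rw [cartan_self, cartanSum_hesitantWeight_two]
      push_cast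
      linarith
    · linarith [hc hu]
  · rw [cartanSum_eq_add u (by omega)]
    linarith [hc fun hu => hT hu rfl]
  · exact cartanSum_hesitantWeight_le_of_two_le hlam ha hinj u hT2

lemma hesitantWeight_le_lam_sub (hlam : ∀ u, 0 ≤ lam u) (ha : IsHesitantLamWalk Γ m a lam)
    (hinj : Set.InjOn a (Set.Ico 1 m)) {s : ℕ} (hs : 1 ≤ s) (hsm : s < m) :
    hesitantWeight Γ lam a m s ≤
      lam (a s) - cartanSum Γ a (hesitantWeight Γ lam a m) (a s) (s + 1) m := by
  rcases hs.lt_or_eq with hs | rfl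
  · have hafter := cartanSum_succ_le (Γ := Γ) (w := hesitantWeight Γ lam a m) hsm
      (fun t h₁ _ => hesitantWeight_nonneg hlam ha hinj (by omega))
      (hinj.mono (Set.Ico_subset_Ico_left (by omega))) (ha.edist_eq_one (by omega))
      (hesitantWeight_self ha.1)
    linarith [two_mul_hesitantWeight_sub_le (Γ := Γ) (a := a) hlam hs hsm,
      hesitantWeight_nonneg hlam ha hinj hs.le]
  · rw [cartanSum_hesitantWeight_two]
    linarith

end HesitantWeight

noncomputable def walkPoint (n : ℕ) (p : ℕ → ℕ) (m : ℕ) (w : ℕ → ℝ) : Fin n → ℝ :=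
  fun k => ∑ t ∈ Finset.range m, if (k : ℕ) = p t then w t else 0

section WalkPoint

variable {n m : ℕ} {p : ℕ → ℕ} {w : ℕ → ℝ}

lemma walkPoint_apply_of_eq (hp : StrictMono p) {t : ℕ} (ht : t < m) {k : Fin n}
    (hk : (k : ℕ) = p t) : walkPoint n p m w k = w t := by
  rw [walkPoint, Finset.sum_eq_single t (fun t' _ ht' => if_neg (hk ▸ hp.injective.ne ht'.symm))
    (fun h => absurd (Finset.mem_range.mpr ht) h), if_pos hk]

lemma walkPoint_apply_of_forall_ne {k : Fin n} (hk : ∀ t < m, (k : ℕ) ≠ p t) :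
    walkPoint n p m w k = 0 :=
  Finset.sum_eq_zero fun t ht => if_neg (hk t (Finset.mem_range.mp ht))

lemma exists_forall_lt_iff_le (hp : StrictMono p) (k : ℕ) : ∃ T, ∀ t, k < p t ↔ T ≤ t := by
  classical
  have hex : ∃ t, k < p t := ⟨k + 1, (Nat.lt_succ_self k).trans_le (hp.id_le _)⟩
  exact ⟨Nat.find hex, fun t => ⟨fun h => Nat.find_min' hex h,
    fun h => (Nat.find_spec hex).trans_le (hp.monotone h)⟩⟩

variable {V : Type*} {Γ : SimpleGraph V} {i : ℕ → V} {lam : V → ℤ}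

lemma Afun_walkPoint (hpn : ∀ t < m, p t < n) (k : ℕ) {T : ℕ} (hT : ∀ t, k < p t ↔ T ≤ t) :
    Afun n (fun j k => cartan Γ (i j) (i k)) (fun j => lam (i j)) k (walkPoint n p m w) =
      lam (i k) - cartanSum Γ (fun t => i (p t)) w (i k) T m := by
  unfold Afun walkPoint cartanSum
  refine congrArg _ ?_
  have hterm : ∀ k' : ℕ, (if k < k' then (cartan Γ (i k) (i k') : ℝ) *
      ∑ t ∈ Finset.range m, (if k' = p t then w t else 0) else 0) =
      ∑ t ∈ Finset.range m, if k' = p t then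
        (if k < p t then (cartan Γ (i k) (i (p t)) : ℝ) * w t else 0) else 0 := fun k' => by
    split_ifs with hk
    · rw [Finset.mul_sum]
      refine Finset.sum_congr rfl fun t _ => ?_
      by_cases ht : k' = p t
      · subst ht
        simp [hk]
      · simp [ht]
    · refine (Finset.sum_eq_zero fun t _ => ?_).symm
      by_cases ht : k' = p t
      · subst ht
        simp [hk]
      · simp [ht]
  rw [Fin.sum_univ_eq_sum_range (fun k' => if k < k' then (cartan Γ (i k) (i k') : ℝ) *
      ∑ t ∈ Finset.range m, (if k' = p t then w t else 0) else 0),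
    Finset.sum_congr rfl fun k' _ => hterm k', Finset.sum_comm,
    Finset.sum_congr rfl fun t ht => by
      rw [Finset.sum_ite_eq', if_pos (Finset.mem_range.mpr (hpn t (Finset.mem_range.mp ht)))],
    ← Finset.sum_filter]
  refine Finset.sum_congr (Finset.ext fun t => ?_) fun _ _ => rfl
  simp only [Finset.mem_filter, Finset.mem_range, Finset.mem_Ico, hT]
  exact and_comm

end WalkPoint

section Forward

variable {V : Type*} {Γ : SimpleGraph V} {n : ℕ} {i : ℕ → V} {lam : V → ℤ} {m : ℕ}
  {p : ℕ → ℕ}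

lemma walkPoint_hesitantWeight_neg_iff (hlam : ∀ u, 0 ≤ lam u)
    (hp : IsHesitantSubword Γ n i lam m p) (hinj : Set.InjOn (fun t => i (p t)) (Set.Ico 1 m))
    (k : Fin n) :
    walkPoint n p m (hesitantWeight Γ lam (fun t => i (p t)) m) k < 0 ↔ (k : ℕ) = p 0 := by
  obtain ⟨hmono, -, ha⟩ := hp
  by_cases hk : ∃ s < m, (k : ℕ) = p s
  · obtain ⟨s, hs, hks⟩ := hk
    rw [walkPoint_apply_of_eq hmono hs hks, hks, hmono.injective.eq_iff]
    rcases Nat.eq_zero_or_pos s with rfl | hs1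
    · have := hesitantWeight_one_pos hlam ha hinj
      simp only [hesitantWeight_zero, iff_true]
      linarith
    · simpa [hs1.ne'] using hesitantWeight_nonneg hlam ha hinj hs1
  · push Not at hk
    rw [walkPoint_apply_of_forall_ne hk]
    simpa using hk 0 (by have := ha.1; omega)

lemma walkPoint_hesitantWeight_mem_twistedCube (hlam : ∀ u, 0 ≤ lam u)
    (hp : IsHesitantSubword Γ n i lam m p) (hinj : Set.InjOn (fun t => i (p t)) (Set.Ico 1 m))
    (hlast : ∀ k, p 0 < k → k < p 1 → i k ≠ i (p 1)) :
    walkPoint n p m (hesitantWeight Γ lam (fun t => i (p t)) m) ∈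
      twistedCube n (fun j k => cartan Γ (i j) (i k)) (fun j => lam (i j)) := by
  obtain ⟨hmono, hpn, ha⟩ := hp
  intro k
  by_cases hk : ∃ s < m, (k : ℕ) = p s
  · obtain ⟨s, hs, hks⟩ := hk
    rw [walkPoint_apply_of_eq hmono hs hks,
      Afun_walkPoint hpn k (T := s + 1) fun t => by rw [hks, hmono.lt_iff_lt]; omega, hks]
    rcases Nat.eq_zero_or_pos s with rfl | hs1
    · have h01 : i (p 0) = i (p 1) := ha.2.1
      have hw := hesitantWeight_one_pos hlam ha hinj
      rw [h01, zero_add, cartanSum_hesitantWeight_one ha.1, hesitantWeight_zero]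
      left
      constructor <;> linarith
    · exact Or.inr ⟨hesitantWeight_nonneg hlam ha hinj hs1,
        hesitantWeight_le_lam_sub hlam ha hinj hs1 hs⟩
  · push Not at hk
    obtain ⟨T, hT⟩ := exists_forall_lt_iff_le hmono k
    rw [walkPoint_apply_of_forall_ne hk, Afun_walkPoint hpn k hT, sub_nonneg]
    refine Or.inr ⟨le_rfl, cartanSum_hesitantWeight_le hlam ha hinj _ T ?_⟩
    rintro hik rfl
    have hk0 : p 0 < k := lt_of_le_of_ne (not_lt.mp fun h => by simpa using (hT 0).mp h)
      (hk 0 (by have := ha.1; omega)).symm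
    exact hlast k hk0 ((hT 1).mpr le_rfl) hik

theorem not_isUntwisted_of_not_avoiding (hlam : ∀ u, 0 ≤ lam u)
    (h : ¬IsHLamWalkAvoiding Γ n i lam) :
    ¬IsUntwisted n (fun j k => cartan Γ (i j) (i k)) (fun j => lam (i j)) := by
  obtain ⟨m, p, hp, hinj, hlast⟩ := exists_normalized_hesitantSubword (not_not.mp h)
  have hx := walkPoint_hesitantWeight_mem_twistedCube hlam hp hinj hlast
  have hneg : (Finset.univ.filter fun k =>
      walkPoint n p m (hesitantWeight Γ lam (fun t => i (p t)) m) k < 0) =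
      {⟨p 0, hp.2.1 0 (by have := hp.2.2.1; omega)⟩} := by
    ext k
    simp [walkPoint_hesitantWeight_neg_iff hlam hp hinj, Fin.ext_iff]
  intro hu
  have hρ := hu.2.2.2 _ hx
  rw [gkRho_eq_neg_one_pow hx, hneg, Finset.card_singleton] at hρ
  norm_num at hρ

end Forward

theorem untwisted_iff_hesitant_lambda_walk_avoiding_general
    {r n : ℕ} (Γ : SimpleGraph (Fin r))
    (i : ℕ → Fin r) (lam : Fin r → ℤ) (hlam : ∀ a, 0 ≤ lam a) :
    IsUntwisted n (fun j k => cartan Γ (i j) (i k)) (fun j => lam (i j)) ↔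
      IsHLamWalkAvoiding Γ n i lam :=
  ⟨fun hu => by_contra fun h => not_isUntwisted_of_not_avoiding hlam h hu,
    fun hav => isUntwisted_of_afunNonnegAbove (afunNonnegAbove_of_avoiding hlam hav)⟩

/-- With `c` determined from the word `i` and `ℓ_j = λ_{i_j}` for a
dominant weight `λ`, the Grossberg–Karshon twisted cube `(C(c,ℓ), ρ)` is untwisted if
and only if `i` is hesitant-`λ`-walk-avoiding. -/
theorem untwisted_iff_hesitant_lambda_walk_avoiding
    {r n : ℕ} (Γ : SimpleGraph (Fin r)) (hΓ : Γ.IsAcyclic)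
    (i : ℕ → Fin r) (lam : Fin r → ℤ) (hlam : ∀ a, 0 ≤ lam a) :
    IsUntwisted n (fun j k => cartan Γ (i j) (i k)) (fun j => lam (i j)) ↔
      IsHLamWalkAvoiding Γ n i lam :=
  untwisted_iff_hesitant_lambda_walk_avoiding_general Γ i lam hlam
end

section
/- Let G be a complex simply-laced semisimple algebraic group of rank r, let i = (i_1,…,i_n) ∈ [r]^n be a word, let λ = Σ_{i=1}^r λ_i ϖ_i be a dominant weight, and define ℓ = (ℓ_1,…,ℓ_n) by ℓ_j = λ_{i_j}. Then i is hesitant-jumping-ℓ-walk-avoiding if and only if i is hesitant-λ-walk-avoiding. -/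
open Finset

attribute [local instance] Classical.propDecidable

/-!
A hesitant jumping walk whose `ℓ`-sum exceeds `ℓ₀ - ℓ₁ = 0` has a letter `a` with `λ_a > 0`
in its tail; since every letter of a jumping walk is adjacent to an earlier one, tracing
these adjacencies back gives a diagram walk from the start of the tail to `a`, i.e. a
hesitant `λ`-walk. Conversely, erasing the loops of the tail of a hesitant `λ`-walk leaves
a diagram walk without repeated letters, which is a jumping walk; it still ends at the
letter with `λ > 0`, so as `λ ≥ 0` its `ℓ`-sum is positive.
-/

section Walks

variable {V : Type*} {Γ : SimpleGraph V}

theorem dSet_eq_one_iff {v : V} {A : Set V} :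
    dSet Γ v A = 1 ↔ v ∉ A ∧ ∃ a ∈ A, Γ.Adj v a := by
  simp only [← SimpleGraph.edist_eq_one_iff_adj]
  constructor
  · intro h
    have hle : ∀ a ∈ A, 1 ≤ Γ.edist v a := fun a ha => h ▸ iInf₂_le a ha
    refine ⟨fun hv => by simpa using hle v hv, ?_⟩
    by_contra! hne
    have h2 : 1 + 1 ≤ dSet Γ v A :=
      le_iInf₂ fun a ha => Order.add_one_le_of_lt ((hle a ha).lt_of_ne (hne a ha).symm)
    norm_num [h] at h2
  · rintro ⟨hv, a, ha, hva⟩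
    refine le_antisymm ((iInf₂_le a ha).trans_eq hva) (le_iInf₂ fun b hb => ?_)
    exact Order.one_le_iff_ne_zero.mpr fun h0 =>
      hv (SimpleGraph.edist_eq_zero_iff.mp h0 ▸ hb)

theorem IsJumpingWalk.exists_adj {N : ℕ} {u : ℕ → V} (hu : IsJumpingWalk Γ N u) {t : ℕ}
    (ht : 1 ≤ t) (htN : t < N) : ∃ k < t, Γ.Adj (u t) (u k) := by
  obtain ⟨-, _, ⟨k, hk, rfl⟩, hadj⟩ := dSet_eq_one_iff.mp (hu t ht htN)
  exact ⟨k, hk, hadj⟩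

theorem IsDiagramWalk.isJumpingWalk {N : ℕ} {u : ℕ → V} (hu : IsDiagramWalk Γ N u)
    (hinj : ∀ a b, a < b → b < N → u a ≠ u b) : IsJumpingWalk Γ N u := by
  intro t ht htN
  obtain ⟨s, rfl⟩ : ∃ s, t = s + 1 := ⟨t - 1, by omega⟩
  refine dSet_eq_one_iff.mpr ⟨?_, u s, ⟨s, by omega, rfl⟩, ?_⟩
  · rintro ⟨k, hk, hks⟩
    exact hinj k (s + 1) hk htN hks
  · exact (SimpleGraph.edist_eq_one_iff_adj.mp (hu s htN)).symm

/-- The walk `u (p 0), …, u (p q)` need only start with the letter `u 0`, not at position `0`,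
so that loops through `u 0` can be erased. -/
structure IsDiagramSubwalk (Γ : SimpleGraph V) (u : ℕ → V) (t q : ℕ) (p : ℕ → ℕ) : Prop where
  strictMono : StrictMono p
  head : u (p 0) = u 0
  last : p q = t
  walk : IsDiagramWalk Γ (q + 1) fun s => u (p s)

-- The tail `t + (s - k)` only keeps the sequence strictly monotone.
def extendIdx (p : ℕ → ℕ) (k t : ℕ) : ℕ → ℕ := fun s => if s < k then p s else t + (s - k)

theorem extendIdx_of_lt {p : ℕ → ℕ} {k t s : ℕ} (hs : s < k) : extendIdx p k t s = p s :=
  if_pos hs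

theorem extendIdx_self (p : ℕ → ℕ) (k t : ℕ) : extendIdx p k t k = t := by
  simp [extendIdx]

theorem strictMono_extendIdx {p : ℕ → ℕ} {k t : ℕ} (hp : StrictMono p)
    (ht : ∀ s < k, p s < t) : StrictMono (extendIdx p k t) := by
  refine strictMono_nat_of_lt_succ fun s => ?_
  simp only [extendIdx]
  split_ifs with hs hs'
  · exact hp (Nat.lt_succ_self s)
  · have := ht s hs
    omega
  · omega
  · omega

theorem isDiagramSubwalk_single {u : ℕ → V} {t : ℕ} (h : u t = u 0) :
    IsDiagramSubwalk Γ u t 0 (fun s => t + s) :=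
  ⟨fun _ _ h => by omega, h, rfl, fun _ h => by omega⟩

theorem IsDiagramSubwalk.extend {u : ℕ → V} {t q : ℕ} {p : ℕ → ℕ}
    (hp : IsDiagramSubwalk Γ u t q p) {k t' : ℕ} (hk : 0 < k) (hkq : k ≤ q + 1) (htt' : t < t')
    (hadj : Γ.Adj (u (p (k - 1))) (u t')) :
    IsDiagramSubwalk Γ u t' k (extendIdx p k t') where
  strictMono := strictMono_extendIdx hp.strictMono fun s hs =>
    (hp.strictMono.monotone (by omega : s ≤ q)).trans_lt (hp.last ▸ htt')
  head := by rw [extendIdx_of_lt hk, hp.head]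
  last := extendIdx_self p k t'
  walk s hs := by
    beta_reduce
    rw [extendIdx_of_lt (by omega : s < k)]
    rcases Nat.lt_or_ge (s + 1) k with hsk | hsk
    · rw [extendIdx_of_lt hsk]
      exact hp.walk s (by omega)
    · rw [(by omega : s + 1 = k), extendIdx_self, (by omega : s = k - 1)]
      exact SimpleGraph.edist_eq_one_iff_adj.mpr hadj

theorem injOn_extendIdx {u : ℕ → V} {p : ℕ → ℕ} {k t' : ℕ}
    (hinj : ∀ a b, a < b → b < k → u (p a) ≠ u (p b)) (hnew : ∀ a < k, u (p a) ≠ u t') :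
    ∀ a b, a < b → b < k + 1 → u (extendIdx p k t' a) ≠ u (extendIdx p k t' b) := by
  intro a b hab hb
  rw [extendIdx_of_lt (by omega)]
  rcases Nat.lt_or_ge b k with hbk | hbk
  · rw [extendIdx_of_lt hbk]
    exact hinj a b hab hbk
  · rw [(by omega : b = k), extendIdx_self]
    exact hnew a (by omega)

theorem IsJumpingWalk.exists_isDiagramSubwalk {N : ℕ} {u : ℕ → V} (hu : IsJumpingWalk Γ N u) :
    ∀ t < N, ∃ q p, IsDiagramSubwalk Γ u t q p := by
  intro t
  induction t using Nat.strong_induction_on with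
  | _ t ih =>
    intro htN
    rcases Nat.eq_zero_or_pos t with rfl | ht
    · exact ⟨0, _, isDiagramSubwalk_single rfl⟩
    obtain ⟨k, hkt, hadj⟩ := hu.exists_adj ht htN
    obtain ⟨q, p, hp⟩ := ih k hkt (hkt.trans htN)
    exact ⟨q + 1, _, hp.extend q.succ_pos le_rfl hkt (by simpa [hp.last] using hadj.symm)⟩

/-- Loop erasure. -/
theorem IsDiagramWalk.exists_injOn_isDiagramSubwalk {N : ℕ} {u : ℕ → V}
    (hu : IsDiagramWalk Γ N u) :
    ∀ t < N, ∃ q p, IsDiagramSubwalk Γ u t q p ∧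
      ∀ a b, a < b → b < q + 1 → u (p a) ≠ u (p b) := by
  intro t htN
  induction t with
  | zero => exact ⟨0, _, isDiagramSubwalk_single rfl, fun a b hab hb => by omega⟩
  | succ t ih =>
    obtain ⟨q, p, hp, hinj⟩ := ih (by omega)
    by_cases hrep : ∃ k ≤ q, u (p k) = u (t + 1)
    · obtain ⟨k, hkq, hk⟩ := hrep
      rcases k with _ | k
      · exact ⟨0, _, isDiagramSubwalk_single (hk ▸ hp.head), fun a b hab hb => by omega⟩
      have hadj : Γ.Adj (u (p k)) (u (t + 1)) :=
        hk ▸ SimpleGraph.edist_eq_one_iff_adj.mp (hp.walk k (by omega))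
      refine ⟨k + 1, _, hp.extend k.succ_pos hkq.step (by omega) (by simpa using hadj), ?_⟩
      refine injOn_extendIdx (fun a b hab hb => hinj a b hab (by omega)) fun a ha => ?_
      exact hk ▸ hinj a (k + 1) ha (by omega)
    · push Not at hrep
      refine ⟨q + 1, _, hp.extend q.succ_pos le_rfl (by omega) ?_,
        injOn_extendIdx hinj fun a ha => hrep a (by omega)⟩
      simpa [hp.last] using SimpleGraph.edist_eq_one_iff_adj.mp (hu t htN)

def hesitantIdx (p : ℕ → ℕ) : ℕ → ℕ
  | 0 => 0
  | s + 1 => p s + 1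

theorem strictMono_hesitantIdx {p : ℕ → ℕ} (hp : StrictMono p) : StrictMono (hesitantIdx p) :=
  strictMono_nat_of_lt_succ fun s => by
    cases s with
    | zero => exact Nat.succ_pos _
    | succ s => exact Nat.succ_lt_succ (hp (Nat.lt_succ_self s))

section Hesitant

variable {w : ℕ → V} {t q : ℕ} {p : ℕ → ℕ}

theorem IsDiagramSubwalk.hesitantIdx_lt (hp : IsDiagramSubwalk Γ (fun s => w (s + 1)) t q p) :
    ∀ s < q + 2, hesitantIdx p s < t + 2
  | 0, _ => by simp [hesitantIdx]
  | s + 1, hs => by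
    have := hp.last ▸ hp.strictMono.monotone (by omega : s ≤ q)
    simp only [hesitantIdx]
    omega

theorem IsDiagramSubwalk.hesitant (hp : IsDiagramSubwalk Γ (fun s => w (s + 1)) t q p)
    (h01 : w 0 = w 1) : w (hesitantIdx p 0) = w (hesitantIdx p 1) :=
  h01.trans hp.head.symm

end Hesitant

def ContainsSubword (P : ℕ → (ℕ → V) → Prop) (n : ℕ) (w : ℕ → V) : Prop :=
  ∃ (m : ℕ) (j : ℕ → ℕ), StrictMono j ∧ (∀ t, t < m → j t < n) ∧ P m (fun t => w (j t))

theorem ContainsSubword.trans {P Q : ℕ → (ℕ → V) → Prop} {n : ℕ} {w : ℕ → V}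
    (h : ContainsSubword P n w) (hPQ : ∀ m v, P m v → ContainsSubword Q m v) :
    ContainsSubword Q n w := by
  obtain ⟨m, j, hj, hjn, hP⟩ := h
  obtain ⟨m', k, hk, hkm, hQ⟩ := hPQ m _ hP
  exact ⟨m', j ∘ k, hj.comp hk, fun t ht => hjn _ (hkm t ht), hQ⟩

theorem isHJLWalkAvoiding_iff {n : ℕ} {w : ℕ → V} {lam : V → ℤ} :
    IsHJLWalkAvoiding Γ n w (fun t => lam (w t)) ↔
      ¬ ContainsSubword (fun m w' => IsHesitantJumpingLWalk Γ m w' fun t => lam (w' t)) n w :=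
  Iff.rfl

theorem isHLamWalkAvoiding_iff {n : ℕ} {w : ℕ → V} {lam : V → ℤ} :
    IsHLamWalkAvoiding Γ n w lam ↔
      ¬ ContainsSubword (fun m w' => IsHesitantLamWalk Γ m w' lam) n w :=
  Iff.rfl

section Directions

variable {m : ℕ} {w : ℕ → V} {lam : V → ℤ}

theorem IsHesitantJumpingLWalk.containsSubword_isHesitantLamWalk
    (h : IsHesitantJumpingLWalk Γ m w fun t => lam (w t)) :
    ContainsSubword (fun m' w' => IsHesitantLamWalk Γ m' w' lam) m w := by
  obtain ⟨⟨hm, h01, hjump⟩, hsum⟩ := h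
  obtain ⟨t, ht, hpos⟩ : ∃ t ∈ Finset.Ico 1 m, 0 < lam (w t) :=
    Finset.exists_lt_of_sum_lt (f := fun _ => 0) (by simpa [h01] using hsum)
  rw [Finset.mem_Ico] at ht
  obtain ⟨q, p, hp⟩ := hjump.exists_isDiagramSubwalk (t - 1) (by omega)
  refine ⟨q + 2, hesitantIdx p, strictMono_hesitantIdx hp.strictMono,
    fun s hs => (hp.hesitantIdx_lt s hs).trans_le (by omega), by omega, hp.hesitant h01,
    hp.walk, ?_⟩
  simpa [hesitantIdx, hp.last, Nat.sub_add_cancel ht.1] using hpos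

theorem IsHesitantLamWalk.containsSubword_isHesitantJumpingLWalk (hlam : ∀ a, 0 ≤ lam a)
    (h : IsHesitantLamWalk Γ m w lam) :
    ContainsSubword (fun m' w' => IsHesitantJumpingLWalk Γ m' w' fun t => lam (w' t)) m w := by
  obtain ⟨hm, h01, hwalk, hpos⟩ := h
  obtain ⟨q, p, hp, hinj⟩ := hwalk.exists_injOn_isDiagramSubwalk (m - 2) (by omega)
  refine ⟨q + 2, hesitantIdx p, strictMono_hesitantIdx hp.strictMono,
    fun s hs => (hp.hesitantIdx_lt s hs).trans_le (by omega),
    ⟨by omega, hp.hesitant h01, hp.walk.isJumpingWalk hinj⟩, ?_⟩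
  beta_reduce
  rw [hp.hesitant h01, sub_self]
  refine Finset.sum_pos' (fun _ _ => hlam _) ⟨q + 1, by simp, ?_⟩
  simpa [hesitantIdx, hp.last, (by omega : m - 2 + 1 = m - 1)] using hpos

end Directions

end Walks

theorem hjl_walk_avoiding_iff_hlam_walk_avoiding_general
    {r n : ℕ} (Γ : SimpleGraph (Fin r))
    (i : ℕ → Fin r) (lam : Fin r → ℤ) (hlam : ∀ a, 0 ≤ lam a) :
    IsHJLWalkAvoiding Γ n i (fun j => lam (i j)) ↔ IsHLamWalkAvoiding Γ n i lam := by
  rw [isHJLWalkAvoiding_iff, isHLamWalkAvoiding_iff, not_iff_not]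
  exact ⟨fun h => h.trans fun _ _ hw => hw.containsSubword_isHesitantLamWalk,
    fun h => h.trans fun _ _ hw => hw.containsSubword_isHesitantJumpingLWalk hlam⟩

/-- With `ℓ_j = λ_{i_j}` for a dominant weight `λ`, the word `i` is
hesitant-jumping-`ℓ`-walk-avoiding if and only if it is hesitant-`λ`-walk-avoiding. -/
theorem hjl_walk_avoiding_iff_hlam_walk_avoiding
    {r n : ℕ} (Γ : SimpleGraph (Fin r)) (hΓ : Γ.IsAcyclic)
    (i : ℕ → Fin r) (lam : Fin r → ℤ) (hlam : ∀ a, 0 ≤ lam a) :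
    IsHJLWalkAvoiding Γ n i (fun j => lam (i j)) ↔ IsHLamWalkAvoiding Γ n i lam :=
  hjl_walk_avoiding_iff_hlam_walk_avoiding_general Γ i lam hlam
end

section
/- Let G be a complex simply-laced semisimple algebraic group of rank r, let i = (i_1,…,i_n) ∈ [r]^n be a word, let λ = Σ_{i=1}^r λ_i ϖ_i be a dominant weight, and define ℓ = (ℓ_1,…,ℓ_n) by ℓ_j = λ_{i_j}. If a subword j = (i_{j_0},i_{j_1},…,i_{j_s}) of i (with j_0 < j_1 < ⋯ < j_s) is a hesitant jumping (ℓ_{j_0},ℓ_{j_1},…,ℓ_{j_s})-walk, then i has a subword which is a hesitant λ-walk. -/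
open Finset

attribute [local instance] Classical.propDecidable

/-! In a jumping walk every letter after the first is adjacent to an earlier one, so following
these back-pointers from any position leads to the first position along an increasing chain of
indices whose letters form a diagram walk. Since `ℓ_0 = ℓ_1`, the inequality
`ℓ_0 - ℓ_1 < ℓ_1 + ⋯ + ℓ_s` forces some `ℓ_t = λ_{i_t}` with `t ≥ 1` to be positive; the chain
ending at `t`, preceded by the repeated letter, is a hesitant `λ`-walk. -/

variable {V : Type*} {Γ : SimpleGraph V}

theorem exists_adj_of_dSet_eq_one {v : V} {A : Set V} (h : dSet Γ v A = 1) :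
    ∃ a ∈ A, Γ.Adj v a := by
  have hA : A.Nonempty := by
    by_contra hA
    simp [dSet, Set.not_nonempty_iff_eq_empty.mp hA] at h
  obtain ⟨a, ha, hva⟩ := csInf_mem (hA.image (Γ.edist v))
  rw [sInf_image, ← dSet, h] at hva
  exact ⟨a, ha, SimpleGraph.edist_eq_one_iff_adj.mp hva⟩

theorem isDiagramWalk_iff {n : ℕ} {w : ℕ → V} :
    IsDiagramWalk Γ n w ↔ ∀ a, a + 1 < n → Γ.Adj (w a) (w (a + 1)) := by
  simp only [IsDiagramWalk, SimpleGraph.edist_eq_one_iff_adj]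

theorem IsJumpingWalk.exists_lt_adj {n : ℕ} {w : ℕ → V} (hw : IsJumpingWalk Γ n w) {s : ℕ}
    (hs1 : 1 ≤ s) (hs : s < n) : ∃ k < s, Γ.Adj (w k) (w s) := by
  obtain ⟨_, ⟨k, hk, rfl⟩, hadj⟩ := exists_adj_of_dSet_eq_one (hw s hs1 hs)
  exact ⟨k, hk, hadj.symm⟩

theorem StrictMono.ite_le_of_lt {f : ℕ → ℕ} (hf : StrictMono f) {q s : ℕ} (hs : f q < s) :
    StrictMono fun t => if t ≤ q then f t else s + (t - (q + 1)) := by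
  refine strictMono_nat_of_lt_succ fun t => ?_
  split_ifs with ht ht'
  · exact hf t.lt_succ_self
  · obtain rfl : t = q := by omega
    simpa using hs
  all_goals omega

theorem IsJumpingWalk.exists_isDiagramWalk_comp {n : ℕ} {w : ℕ → V}
    (hw : IsJumpingWalk Γ n w) {s : ℕ} (hs : s < n) :
    ∃ (q : ℕ) (f : ℕ → ℕ), StrictMono f ∧ f 0 = 0 ∧ f q = s ∧ IsDiagramWalk Γ (q + 1) (w ∘ f) := by
  induction s using Nat.strong_induction_on with
  | _ s ih =>
    rcases Nat.eq_zero_or_pos s with rfl | hs0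
    · exact ⟨0, id, strictMono_id, rfl, rfl, fun a ha => by omega⟩
    obtain ⟨k, hks, hadj⟩ := hw.exists_lt_adj hs0 hs
    obtain ⟨q, f, hf, hf0, hfq, hwalk⟩ := ih k hks (hks.trans hs)
    refine ⟨q + 1, fun t => if t ≤ q then f t else s + (t - (q + 1)),
      hf.ite_le_of_lt (hfq ▸ hks), by simp [hf0], by simp, ?_⟩
    rw [isDiagramWalk_iff] at hwalk ⊢
    intro a ha
    rcases Nat.lt_or_ge a q with haq | haq
    · simpa [haq.le, Nat.succ_le_of_lt haq] using hwalk a (by omega)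
    · obtain rfl : a = q := by omega
      simpa [hfq] using hadj

def consZeroSucc (f : ℕ → ℕ) : ℕ → ℕ
  | 0 => 0
  | t + 1 => f t + 1

theorem StrictMono.consZeroSucc {f : ℕ → ℕ} (hf : StrictMono f) : StrictMono (consZeroSucc f) :=
  strictMono_nat_of_lt_succ fun
    | 0 => Nat.succ_pos _
    | t + 1 => Nat.succ_lt_succ (hf t.lt_succ_self)

theorem isHesitantLamWalk_comp_consZeroSucc {w : ℕ → V} (hw01 : w 0 = w 1) {lam : V → ℤ}
    {q : ℕ} {f : ℕ → ℕ} (hf0 : f 0 = 0) (hwalk : IsDiagramWalk Γ (q + 1) fun t => w (f t + 1))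
    (hpos : 0 < lam (w (f q + 1))) : IsHesitantLamWalk Γ (q + 2) (w ∘ consZeroSucc f) lam :=
  ⟨by omega, by simp [consZeroSucc, hf0, hw01], hwalk, hpos⟩

theorem exists_hesitant_lam_walk_of_hesitant_jumping_ell_walk_general
    {r n : ℕ} (Γ : SimpleGraph (Fin r))
    (i : ℕ → Fin r) (lam : Fin r → ℤ)
    (m : ℕ) (j : ℕ → ℕ) (hj : StrictMono j) (hjn : ∀ t, t < m → j t < n)
    (hw : IsHesitantJumpingLWalk Γ m (fun t => i (j t)) (fun t => lam (i (j t)))) :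
    ∃ (p : ℕ) (k : ℕ → ℕ), StrictMono k ∧ (∀ t, t < p → k t < n) ∧
      IsHesitantLamWalk Γ p (fun t => i (k t)) lam := by
  obtain ⟨⟨-, h01, hjump⟩, hsum⟩ := hw
  obtain ⟨t, ht, hpos⟩ : ∃ t ∈ Ico 1 m, 0 < lam (i (j t)) := by
    refine Finset.exists_lt_of_sum_lt (f := 0) ?_
    simpa [show i (j 0) = i (j 1) from h01] using hsum
  obtain ⟨ht1, htm⟩ := mem_Ico.mp ht
  obtain ⟨q, f, hf, hf0, hfq, hwalk⟩ := hjump.exists_isDiagramWalk_comp (s := t - 1) (by omega)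
  refine ⟨q + 2, j ∘ consZeroSucc f, hj.comp hf.consZeroSucc, fun a ha => hjn _ ?_,
    isHesitantLamWalk_comp_consZeroSucc h01 hf0 hwalk (by simpa [hfq, Nat.sub_add_cancel ht1])⟩
  have hlast : consZeroSucc f (q + 1) = t := by simp [consZeroSucc, hfq]; omega
  have := hf.consZeroSucc.monotone (show a ≤ q + 1 by omega)
  omega

/-- With `ℓ_j = λ_{i_j}` for a dominant weight `λ`: if a subword of
`i` (indexed by the strictly increasing sequence `j`) is a hesitant jumping `ℓ`-walk,
then `i` has a subword which is a hesitant `λ`-walk. -/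
theorem exists_hesitant_lam_walk_of_hesitant_jumping_ell_walk
    {r n : ℕ} (Γ : SimpleGraph (Fin r)) (hΓ : Γ.IsAcyclic)
    (i : ℕ → Fin r) (lam : Fin r → ℤ) (hlam : ∀ a, 0 ≤ lam a)
    (m : ℕ) (j : ℕ → ℕ) (hj : StrictMono j) (hjn : ∀ t, t < m → j t < n)
    (hw : IsHesitantJumpingLWalk Γ m (fun t => i (j t)) (fun t => lam (i (j t)))) :
    ∃ (p : ℕ) (k : ℕ → ℕ), StrictMono k ∧ (∀ t, t < p → k t < n) ∧
      IsHesitantLamWalk Γ p (fun t => i (k t)) lam :=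
  exists_hesitant_lam_walk_of_hesitant_jumping_ell_walk_general Γ i lam m j hj hjn hw
end

section
/- Let n be a positive integer, ℓ = (ℓ_1,…,ℓ_n) ∈ ℤ^n, and let c = {c_{jk} : 1 ≤ j < k ≤ n} be integers. Let j_0 < j_1 < ⋯ < j_s be indices in {1,…,n} such that c_{j_0,j_1} = 2, c_{j_0,p} = c_{j_1,p} for all p > j_1, and c_{j_1,j_t} + c_{j_2,j_t} + ⋯ + c_{j_{t−1},j_t} = −1 for all 2 ≤ t ≤ s. Define σ ∈ {+,−}^n by σ_p = − if p ∈ {j_0, j_1,…, j_s} and σ_p = + otherwise. Then m_{σ,j_1} = ℓ_{j_1} + ℓ_{j_2} + ⋯ + ℓ_{j_s} and m_{σ,j_0} = ℓ_{j_0} − ℓ_{j_1} − (ℓ_{j_1} + ℓ_{j_2} + ⋯ + ℓ_{j_s}). -/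
open Finset

attribute [local instance] Classical.propDecidable

/-!
Put `M t = m_{σ,j_t}`. Since `σ` is supported on `{j_0, …, j_s}`, the recursion for `m_σ`
restricted to this subsequence is the triangular system
`M r = ℓ_{j_r} - Σ_{r < t ≤ s} c_{j_r j_t} M t`. Summing it over `1 ≤ r ≤ s` and exchanging
the order of summation, the column sums `c_{j_1 j_t} + ⋯ + c_{j_{t-1} j_t} = -1` make every
`M t` with `t ≥ 2` cancel, leaving `M 1 = ℓ_{j_1} + ⋯ + ℓ_{j_s}`. In the row of `j_0`, the
conditions `c_{j_0 j_1} = 2` and `c_{j_0 p} = c_{j_1 p}` give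
`M 0 = ℓ_{j_0} - M 1 - (M 1 + Σ_{t ≥ 2} c_{j_1 j_t} M t)`, and the row of `j_1` says the
bracket is `ℓ_{j_1}`.
-/

section mSigma

variable {n : ℕ} {c : ℕ → ℕ → ℤ} {ℓ : ℕ → ℤ} {σ : ℕ → Bool}

lemma mSigma_of_true {p : ℕ} (h : σ p = true) :
    mSigma n c ℓ σ p = ℓ p - ∑ k ∈ Ico (p + 1) n, c p k * mSigma n c ℓ σ k := by
  rw [mSigma, if_pos h, sum_attach (Ico (p + 1) n) (fun k => c p k * mSigma n c ℓ σ k)]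

lemma mSigma_of_false {p : ℕ} (h : σ p = false) : mSigma n c ℓ σ p = 0 := by
  rw [mSigma, if_neg (by simp [h])]

lemma mSigma_comp_eq_sub_sum {j : ℕ → ℕ} {s : ℕ} (hj : StrictMono j)
    (hjn : ∀ t, t ≤ s → j t < n) (hσ : ∀ p, σ p = true ↔ ∃ t, t ≤ s ∧ j t = p)
    {r : ℕ} (hr : r ≤ s) :
    mSigma n c ℓ σ (j r) =
      ℓ (j r) - ∑ t ∈ Ioc r s, c (j r) (j t) * mSigma n c ℓ σ (j t) := by
  rw [mSigma_of_true ((hσ (j r)).2 ⟨r, hr, rfl⟩)]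
  have hsub : (Ioc r s).image j ⊆ Ico (j r + 1) n := by
    rintro _ hk
    obtain ⟨t, ht, rfl⟩ := mem_image.1 hk
    rw [mem_Ioc] at ht
    exact mem_Ico.2 ⟨hj ht.1, hjn t ht.2⟩
  have hvanish : ∀ k ∈ Ico (j r + 1) n, k ∉ (Ioc r s).image j →
      c (j r) k * mSigma n c ℓ σ k = 0 := by
    intro k hk hk'
    cases hk_sign : σ k with
    | false => rw [mSigma_of_false hk_sign, mul_zero]
    | true =>
      obtain ⟨t, ht, rfl⟩ := (hσ k).1 hk_sign
      have hrt : r < t := hj.lt_iff_lt.1 (mem_Ico.1 hk).1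
      exact absurd (mem_image_of_mem j (mem_Ioc.2 ⟨hrt, ht⟩)) hk'
  rw [← sum_subset hsub hvanish, sum_image hj.injective.injOn]

end mSigma

lemma eq_sum_of_triangular {M L : ℕ → ℤ} {a : ℕ → ℕ → ℤ} {b s : ℕ} (hbs : b ≤ s)
    (hM : ∀ r ∈ Icc b s, M r = L r - ∑ t ∈ Ioc r s, a r t * M t)
    (ha : ∀ t ∈ Ioc b s, ∑ u ∈ Ico b t, a u t = -1) :
    M b = ∑ t ∈ Icc b s, L t := by
  have hsum : ∑ r ∈ Icc b s, M r =
      ∑ r ∈ Icc b s, L r - ∑ r ∈ Icc b s, ∑ t ∈ Ioc r s, a r t * M t := by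
    rw [← sum_sub_distrib]
    exact sum_congr rfl hM
  have hswap : ∑ r ∈ Icc b s, ∑ t ∈ Ioc r s, a r t * M t =
      ∑ t ∈ Icc b s, ∑ u ∈ Ico b t, a u t * M t :=
    sum_comm' fun r t => by simp only [mem_Icc, mem_Ioc, mem_Ico]; omega
  have hcolumns : ∑ t ∈ Icc b s, ∑ u ∈ Ico b t, a u t * M t = -∑ t ∈ Ioc b s, M t := by
    rw [Icc_eq_cons_Ioc hbs, sum_cons, Ico_self, sum_empty, zero_add, ← sum_neg_distrib]
    refine sum_congr rfl fun t ht => ?_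
    rw [← sum_mul, ha t ht, neg_one_mul]
  have hsplit : ∑ r ∈ Icc b s, M r = M b + ∑ t ∈ Ioc b s, M t := by
    rw [Icc_eq_cons_Ioc hbs, sum_cons]
  linarith

theorem mSigma_values_general (n : ℕ) (c : ℕ → ℕ → ℤ) (ℓ : ℕ → ℤ)
    (s : ℕ) (hs : 1 ≤ s) (j : ℕ → ℕ) (hj : StrictMono j)
    (hjn : ∀ t, t ≤ s → j t < n)
    (h1 : c (j 0) (j 1) = 2) (h2 : ∀ p, j 1 < p → c (j 0) p = c (j 1) p)
    (h3 : ∀ t, 2 ≤ t → t ≤ s → ∑ u ∈ Finset.Ico 1 t, c (j u) (j t) = -1)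
    (σ : ℕ → Bool) (hσ : ∀ p, σ p = true ↔ ∃ t, t ≤ s ∧ j t = p) :
    mSigma n c ℓ σ (j 1) = ∑ t ∈ Finset.Icc 1 s, ℓ (j t) ∧
      mSigma n c ℓ σ (j 0) = ℓ (j 0) - ℓ (j 1) - ∑ t ∈ Finset.Icc 1 s, ℓ (j t) := by
  set M : ℕ → ℤ := fun t => mSigma n c ℓ σ (j t)
  have hrow : ∀ r, r ≤ s → M r = ℓ (j r) - ∑ t ∈ Ioc r s, c (j r) (j t) * M t :=
    fun r hr => mSigma_comp_eq_sub_sum hj hjn hσ hr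
  have hM1 : M 1 = ∑ t ∈ Icc 1 s, ℓ (j t) :=
    eq_sum_of_triangular hs (fun r hr => hrow r (mem_Icc.1 hr).2)
      (fun t ht => h3 t (mem_Ioc.1 ht).1 (mem_Ioc.1 ht).2)
  refine ⟨hM1, ?_⟩
  have hrow0 : ∑ t ∈ Ioc 0 s, c (j 0) (j t) * M t =
      2 * M 1 + ∑ t ∈ Ioc 1 s, c (j 1) (j t) * M t := by
    rw [← Icc_add_one_left_eq_Ioc, zero_add, Icc_eq_cons_Ioc hs, sum_cons, h1]
    congr 1
    exact sum_congr rfl fun t ht => by rw [h2 (j t) (hj (mem_Ioc.1 ht).1)]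
  rw [← hM1]
  linarith [hrow 0 (Nat.zero_le s), hrow 1 hs]

/-- Let `n` be positive, `ℓ ∈ ℤ^n`, and `c = {c_{jk}}` integers.
Let `j 0 < j 1 < ⋯ < j s` be indices in `{0,…,n-1}` with `c_{j_0,j_1} = 2`,
`c_{j_0,p} = c_{j_1,p}` for all `p > j 1`, and
`c_{j_1,j_t} + ⋯ + c_{j_{t-1},j_t} = -1` for all `2 ≤ t ≤ s`. Define `σ ∈ {+,-}^n` by
`σ_p = -` (that is, `true`) exactly when `p ∈ {j 0, …, j s}`. Then
`m_{σ,j_1} = ℓ_{j_1} + ⋯ + ℓ_{j_s}` and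
`m_{σ,j_0} = ℓ_{j_0} - ℓ_{j_1} - (ℓ_{j_1} + ⋯ + ℓ_{j_s})`. -/
theorem mSigma_values (n : ℕ) (hn : 0 < n) (c : ℕ → ℕ → ℤ) (ℓ : ℕ → ℤ)
    (s : ℕ) (hs : 1 ≤ s) (j : ℕ → ℕ) (hj : StrictMono j)
    (hjn : ∀ t, t ≤ s → j t < n)
    (h1 : c (j 0) (j 1) = 2) (h2 : ∀ p, j 1 < p → c (j 0) p = c (j 1) p)
    (h3 : ∀ t, 2 ≤ t → t ≤ s → ∑ u ∈ Finset.Ico 1 t, c (j u) (j t) = -1)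
    (σ : ℕ → Bool) (hσ : ∀ p, σ p = true ↔ ∃ t, t ≤ s ∧ j t = p) :
    mSigma n c ℓ σ (j 1) = ∑ t ∈ Finset.Icc 1 s, ℓ (j t) ∧
      mSigma n c ℓ σ (j 0) = ℓ (j 0) - ℓ (j 1) - ∑ t ∈ Finset.Icc 1 s, ℓ (j t) :=
  mSigma_values_general n c ℓ s hs j hj hjn h1 h2 h3 σ hσ
end
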